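/- Let ε > 0 and let z₁,…,z_k be linearly independent vectors in ℝᵐ with |z_i| ≤ 1 for all i, whose Gram–Schmidt orthogonalization z₁* = z₁, z₂*, …, z_k* satisfies |z_j*| ≥ ε for all j. Let δ ≥ 0 satisfy δ·(1 + 1/ε)^k ≤ 1/2 and 2δ·(1 + 1/ε)^k < ε/2, and let z₁'',…,z_k'' ∈ ℝᵐ satisfy |z_i''| ≤ δ for all i. Then for every vector z' in the span of the perturbed vectors z₁ − z₁'', …, z_k − z_k'' with |z'| ≤ 1 and every vector w ∈ ℝᵐ, the Euclidean distance from z' + w to the span of z₁,…,z_k is strictly less than |w| + ε/2. -/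

import Mathlib

/-! If `x = ∑ cᵢ zᵢ`, pairing `x` with the Gram–Schmidt vector `z_j*` kills every `zᵢ` with
`i < j` and turns `zⱼ` into `‖z_j*‖²`, so `ε |cⱼ| ≤ ‖x‖ + ∑_{i > j} |cᵢ|`. A discrete Grönwall
argument from the last index down then gives `∑ |cᵢ| ≤ ((1 + 1/ε)^k - 1) ‖x‖`. For `z'` in the
perturbed span, `z' = y - u` with `y = ∑ cᵢ zᵢ` in the span of the `zᵢ` and `‖u‖ ≤ δ ∑ |cᵢ|`;
the coefficient bound applied to `y` and the first smallness condition on `δ` give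
`∑ |cᵢ| ≤ 2 ((1 + 1/ε)^k - 1)`, hence `‖u‖ < ε/2` by the second, and `y` is a point of the span
at distance at most `‖w‖ + ‖u‖` from `z' + w`. -/

open scoped RealInnerProductSpace
open Finset InnerProductSpace

theorem Finset.sum_le_pow_card_sub_one_mul {ι : Type*} [Fintype ι] [LinearOrder ι]
    {a : ι → ℝ} {r X : ℝ} (ha : ∀ i, 0 ≤ a i) (hr : 0 ≤ r)
    (h : ∀ j, a j ≤ r * (X + ∑ i with j < i, a i)) :
    ∑ i, a i ≤ ((1 + r) ^ Fintype.card ι - 1) * X := by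
  suffices key : ∀ s : Finset ι, IsUpperSet (s : Set ι) →
      ∑ i ∈ s, a i ≤ ((1 + r) ^ #s - 1) * X from
    key univ (by simpa using isUpperSet_univ)
  intro s
  induction s using Finset.induction_on_min with
  | empty => simp
  | insert j s hjs ih =>
    intro hup
    have hj : j ∉ s := fun h => lt_irrefl j (hjs j h)
    have hs : IsUpperSet (s : Set ι) := fun x y hxy hx => by
      have hy : y ∈ insert j s := hup hxy (mem_insert_of_mem hx)
      exact (mem_insert.1 hy).resolve_left ((hjs x hx).trans_le hxy).ne'
    have htail : ∑ i with j < i, a i ≤ ∑ i ∈ s, a i := by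
      refine sum_le_sum_of_subset_of_nonneg (fun i hi => ?_) fun i _ _ => ha i
      have hji : j < i := (mem_filter.1 hi).2
      exact (mem_insert.1 (hup hji.le (mem_insert_self j s))).resolve_left hji.ne'
    rw [sum_insert hj, card_insert_of_notMem hj, pow_succ]
    calc a j + ∑ i ∈ s, a i ≤ r * (X + ∑ i ∈ s, a i) + ∑ i ∈ s, a i := by
          gcongr
          exact (h j).trans (by gcongr)
      _ = r * X + (1 + r) * ∑ i ∈ s, a i := by ring
      _ ≤ r * X + (1 + r) * (((1 + r) ^ #s - 1) * X) := by
          gcongr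
          exact ih hs
      _ = ((1 + r) ^ #s * (1 + r) - 1) * X := by ring

theorem norm_sum_smul_le_mul_sum_abs {ι E : Type*} [SeminormedAddCommGroup E] [NormedSpace ℝ E]
    (s : Finset ι) (c : ι → ℝ) {v : ι → E} {δ : ℝ} (hv : ∀ i, ‖v i‖ ≤ δ) :
    ‖∑ i ∈ s, c i • v i‖ ≤ δ * ∑ i ∈ s, |c i| := by
  rw [mul_sum]
  refine (norm_sum_le _ _).trans (sum_le_sum fun i _ => ?_)
  rw [norm_smul, Real.norm_eq_abs, mul_comm δ]
  exact mul_le_mul_of_nonneg_left (hv i) (abs_nonneg _)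

section GramSchmidt

variable {E ι : Type*} [NormedAddCommGroup E] [InnerProductSpace ℝ E]
  [LinearOrder ι] [LocallyFiniteOrderBot ι] [WellFoundedLT ι]

theorem real_inner_gramSchmidt_self (f : ι → E) (j : ι) :
    ⟪gramSchmidt ℝ f j, f j⟫ = ‖gramSchmidt ℝ f j‖ ^ 2 := by
  conv_lhs => rw [gramSchmidt_def'' ℝ f j]
  rw [inner_add_right, inner_sum, sum_eq_zero fun i hi => ?_, add_zero,
    real_inner_self_eq_norm_sq]
  rw [inner_smul_right, gramSchmidt_orthogonal ℝ f (mem_Iio.1 hi).ne', mul_zero]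

variable [Fintype ι]

theorem real_inner_gramSchmidt_sum_smul (f : ι → E) (c : ι → ℝ) (j : ι) :
    ⟪gramSchmidt ℝ f j, ∑ i, c i • f i⟫ =
      c j * ‖gramSchmidt ℝ f j‖ ^ 2 + ∑ i with j < i, c i * ⟪gramSchmidt ℝ f j, f i⟫ := by
  simp_rw [inner_sum, real_inner_smul_right]
  rw [← sum_filter_add_sum_filter_not univ (j < ·), add_comm,
    sum_eq_single_of_mem j (by simp) fun i hi hij => ?_, real_inner_gramSchmidt_self]
  have hij : i < j := lt_of_le_of_ne (not_lt.1 (mem_filter.1 hi).2) hij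
  rw [gramSchmidt_inv_triangular ℝ f hij, mul_zero]

theorem abs_mul_norm_gramSchmidt_le {f : ι → E} (hf : ∀ i, ‖f i‖ ≤ 1) (c : ι → ℝ) (j : ι) :
    |c j| * ‖gramSchmidt ℝ f j‖ ≤ ‖∑ i, c i • f i‖ + ∑ i with j < i, |c i| := by
  set g := gramSchmidt ℝ f j
  rcases (norm_nonneg g).eq_or_lt with hg | hg
  · rw [← hg, mul_zero]
    positivity
  refine le_of_mul_le_mul_left ?_ hg
  calc ‖g‖ * (|c j| * ‖g‖) = |c j * ‖g‖ ^ 2| := by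
        rw [abs_mul, abs_of_nonneg (sq_nonneg ‖g‖)]; ring
    _ = |⟪g, ∑ i, c i • f i⟫ - ∑ i with j < i, c i * ⟪g, f i⟫| := by
        rw [real_inner_gramSchmidt_sum_smul, add_sub_cancel_right]
    _ ≤ |⟪g, ∑ i, c i • f i⟫| + ∑ i with j < i, |c i * ⟪g, f i⟫| :=
        (abs_sub _ _).trans (add_le_add_right (abs_sum_le_sum_abs _ _) _)
    _ ≤ ‖g‖ * ‖∑ i, c i • f i‖ + ∑ i with j < i, ‖g‖ * |c i| := by
        gcongr with i
        · exact abs_real_inner_le_norm _ _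
        · rw [abs_mul, mul_comm ‖g‖]
          gcongr
          calc |⟪g, f i⟫| ≤ ‖g‖ * ‖f i‖ := abs_real_inner_le_norm _ _
            _ ≤ ‖g‖ := mul_le_of_le_one_right (norm_nonneg _) (hf i)
    _ = ‖g‖ * (‖∑ i, c i • f i‖ + ∑ i with j < i, |c i|) := by rw [mul_add, mul_sum]

theorem sum_abs_le_of_le_norm_gramSchmidt {ε : ℝ} (hε : 0 < ε) {f : ι → E}
    (hf : ∀ i, ‖f i‖ ≤ 1) (hgs : ∀ j, ε ≤ ‖gramSchmidt ℝ f j‖) (c : ι → ℝ) :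
    ∑ i, |c i| ≤ ((1 + 1 / ε) ^ Fintype.card ι - 1) * ‖∑ i, c i • f i‖ :=
  sum_le_pow_card_sub_one_mul (fun i => abs_nonneg _) (by positivity) fun j => by
    rw [one_div_mul_eq_div, le_div_iff₀ hε]
    exact (mul_le_mul_of_nonneg_left (hgs j) (abs_nonneg _)).trans
      (abs_mul_norm_gramSchmidt_le hf c j)

theorem mul_sum_abs_lt_of_norm_sum_smul_sub_le_one {ε δ : ℝ} (hε : 0 < ε) {f g : ι → E}
    (hf : ∀ i, ‖f i‖ ≤ 1) (hgs : ∀ j, ε ≤ ‖gramSchmidt ℝ f j‖) (hδ0 : 0 ≤ δ)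
    (hδ1 : δ * (1 + 1 / ε) ^ Fintype.card ι ≤ 1 / 2)
    (hδ2 : 2 * δ * (1 + 1 / ε) ^ Fintype.card ι < ε / 2) (hg : ∀ i, ‖g i‖ ≤ δ) (c : ι → ℝ)
    (hc : ‖∑ i, c i • (f i - g i)‖ ≤ 1) :
    δ * ∑ i, |c i| < ε / 2 := by
  set P := (1 + 1 / ε) ^ Fintype.card ι
  set S := ∑ i, |c i|
  have hP : 1 ≤ P := one_le_pow₀ (le_add_of_nonneg_right (by positivity))
  have hS : 0 ≤ S := sum_nonneg fun i _ => abs_nonneg _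
  have hf_sum : ‖∑ i, c i • f i‖ ≤ 1 + δ * S := by
    have hsplit : ∑ i, c i • f i = ∑ i, c i • (f i - g i) + ∑ i, c i • g i := by
      rw [← sum_add_distrib]
      simp_rw [smul_sub, sub_add_cancel]
    rw [hsplit]
    exact (norm_add_le _ _).trans (add_le_add hc (norm_sum_smul_le_mul_sum_abs _ c hg))
  have hSP : S ≤ (P - 1) * (1 + δ * S) :=
    (sum_abs_le_of_le_norm_gramSchmidt hε hf hgs c).trans
      (mul_le_mul_of_nonneg_left hf_sum (by linarith))
  have hS2 : S ≤ 2 * (P - 1) := by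
    have : (P - 1) * δ * S ≤ S / 2 := by nlinarith [mul_nonneg hδ0 hS]
    nlinarith
  calc δ * S ≤ δ * (2 * (P - 1)) := mul_le_mul_of_nonneg_left hS2 hδ0
    _ ≤ 2 * δ * P := by linarith
    _ < ε / 2 := hδ2

end GramSchmidt

theorem stmt13 {m k : ℕ} (ε : ℝ) (hε : 0 < ε) (z : Fin k → EuclideanSpace ℝ (Fin m))
    (hnorm : ∀ i, ‖z i‖ ≤ 1)
    (hgs : ∀ j : Fin k,
      ε ≤ ‖@InnerProductSpace.gramSchmidt ℝ _ _ _ _ (Fin k) _ _ (inferInstanceAs (WellFoundedLT (Fin k))) z j‖)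
    (δ : ℝ) (hδ0 : 0 ≤ δ) (hδ1 : δ * (1 + 1 / ε) ^ k ≤ 1 / 2)
    (hδ2 : 2 * δ * (1 + 1 / ε) ^ k < ε / 2)
    (z'' : Fin k → EuclideanSpace ℝ (Fin m)) (hz'' : ∀ i, ‖z'' i‖ ≤ δ) :
    ∀ z' ∈ Submodule.span ℝ (Set.range fun i => z i - z'' i), ‖z'‖ ≤ 1 →
      ∀ w : EuclideanSpace ℝ (Fin m),
        Metric.infDist (z' + w) (Submodule.span ℝ (Set.range z) : Set (EuclideanSpace ℝ (Fin m)))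
          < ‖w‖ + ε / 2 := by
  intro z' hz' hz'1 w
  obtain ⟨c, rfl⟩ := (Submodule.mem_span_range_iff_exists_fun ℝ).1 hz'
  have hu : ‖∑ i, c i • z'' i‖ < ε / 2 :=
    (norm_sum_smul_le_mul_sum_abs _ c hz'').trans_lt
      (mul_sum_abs_lt_of_norm_sum_smul_sub_le_one hε hnorm hgs hδ0
        (by rwa [Fintype.card_fin]) (by rwa [Fintype.card_fin]) hz'' c hz'1)
  have hy : ∑ i, c i • z i ∈ Submodule.span ℝ (Set.range z) :=
    Submodule.sum_mem _ fun i _ => Submodule.smul_mem _ _ (Submodule.subset_span ⟨i, rfl⟩)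
  calc Metric.infDist _ _ ≤ dist (∑ i, c i • (z i - z'' i) + w) (∑ i, c i • z i) :=
        Metric.infDist_le_dist_of_mem hy
    _ = ‖w - ∑ i, c i • z'' i‖ := by
        simp only [dist_eq_norm, smul_sub, sum_sub_distrib]
        congr 1
        abel
    _ ≤ ‖w‖ + ‖∑ i, c i • z'' i‖ := norm_sub_le _ _
    _ < ‖w‖ + ε / 2 := by gcongr
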